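/- arXiv:2604.22019 — 3 statements merged into one kernel-verified Lean document; each statement's English description precedes it below -/
import Mathlib

section
/- Let Ω and Λ be LF-inducing sets with Λ ⊆ Ω, let n be a positive integer, and let ⋆_{i=1}^n F_Ω = { (x_1, ..., x_{n+1}) ∈ [0,1]^{n+1} : (x_i, x_{i+1}) ∈ F_Ω for all 1 ≤ i ≤ n }. If U ⊆ ⋆_{i=1}^n F_Ω is a nonempty set open in ⋆_{i=1}^n F_Ω, then both { (x_{n+1}, x_{n+2}) ∈ F_Λ : (x_1, ..., x_{n+1}) ∈ U for some x_1, ..., x_n } and { (x_0, x_1) ∈ F_Λ : (x_1, ..., x_{n+1}) ∈ U for some x_2, ..., x_{n+1} } contain nonempty subsets that are open in F_Λ. -/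
open Set Filter Topology

/-- One-sided Mahavier product of a relation `F` on `X`. -/
def MahavierPlus {X : Type*} (F : Set (X × X)) : Set (ℕ → X) :=
  {x | ∀ n : ℕ, (x n, x (n + 1)) ∈ F}

/-- Two-sided Mahavier product of a relation `F` on `X`. -/
def MahavierTwo {X : Type*} (F : Set (X × X)) : Set (ℤ → X) :=
  {x | ∀ n : ℤ, (x n, x (n + 1)) ∈ F}

/-- The shift map on the one-sided Mahavier product. -/
def shiftPlus {X : Type*} (F : Set (X × X)) (x : MahavierPlus F) : MahavierPlus F :=
  ⟨fun n => (x : ℕ → X) (n + 1), fun n => x.2 (n + 1)⟩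

/-- The shift map on the two-sided Mahavier product. -/
def shiftTwo {X : Type*} (F : Set (X × X)) (x : MahavierTwo F) : MahavierTwo F :=
  ⟨fun n => (x : ℤ → X) (n + 1), fun n => x.2 (n + 1)⟩

/-- The metric `D(x,y) = sup_{n ≥ 1} d(x_n, y_n)/2^n` on one-sided sequences
(coordinates are indexed from `0` here, so the weight is `2^(n+1)`). -/
noncomputable def DPlus {X : Type*} [PseudoMetricSpace X] (x y : ℕ → X) : ℝ :=
  ⨆ n : ℕ, dist (x n) (y n) / 2 ^ (n + 1)

/-- The metric `D(x,y) = sup_{n ∈ ℤ} d(x_n, y_n)/2^{|n|}` on two-sided sequences. -/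
noncomputable def DTwo {X : Type*} [PseudoMetricSpace X] (x y : ℤ → X) : ℝ :=
  ⨆ n : ℤ, dist (x n) (y n) / 2 ^ n.natAbs

/-- Topological transitivity. -/
def TopTransitive {Y : Type*} [TopologicalSpace Y] (f : Y → Y) : Prop :=
  ∀ U V : Set Y, IsOpen U → IsOpen V → U.Nonempty → V.Nonempty →
    ∃ n : ℕ, (f^[n] '' U ∩ V).Nonempty

/-- Topological mixing. -/
def TopMixing {Y : Type*} [TopologicalSpace Y] (f : Y → Y) : Prop :=
  ∀ U V : Set Y, IsOpen U → IsOpen V → U.Nonempty → V.Nonempty →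
    ∃ n₀ : ℕ, ∀ n : ℕ, n₀ ≤ n → (f^[n] '' U ∩ V).Nonempty

/-- The shadowing property for a map `f` with respect to a distance `dY`. -/
def ShadowingProp {Y : Type*} (dY : Y → Y → ℝ) (f : Y → Y) : Prop :=
  ∀ ε : ℝ, 0 < ε → ∃ δ : ℝ, 0 < δ ∧ ∀ x : ℕ → Y,
    (∀ k : ℕ, dY (f (x k)) (x (k + 1)) < δ) →
    ∃ y : Y, ∀ k : ℕ, dY (f^[k] y) (x k) < ε

/-- The specification property for a map `f` with respect to a distance `dY`. -/
def SpecProp {Y : Type*} (dY : Y → Y → ℝ) (f : Y → Y) : Prop :=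
  ∀ ε : ℝ, 0 < ε → ∃ N : ℕ, 0 < N ∧ ∀ n : ℕ, 0 < n →
    ∀ x : Fin n → Y, ∀ k l : Fin n → ℕ,
      (∀ i, k i ≤ l i) →
      (∀ i j : Fin n, (i : ℕ) + 1 = (j : ℕ) → l i + N ≤ k j) →
      ∃ y : Y, ∀ i : Fin n, ∀ m : ℕ, k i ≤ m → m ≤ l i →
        dY (f^[m] y) (f^[m] (x i)) ≤ ε

/-- The CR-specification property for the one-sided Mahavier product of `F`. -/
def CRSpec {X : Type*} [PseudoMetricSpace X] (F : Set (X × X)) : Prop :=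
  ∀ ε : ℝ, 0 < ε → ∃ N : ℕ, 0 < N ∧ ∀ n : ℕ, 0 < n →
    ∀ x : Fin n → MahavierPlus F, ∀ k l : Fin n → ℕ,
      (∀ i, k i ≤ l i) →
      (∀ i j : Fin n, (i : ℕ) + 1 = (j : ℕ) → l i + N ≤ k j) →
      ∃ y : MahavierPlus F, ∀ i : Fin n, ∀ m : ℕ, k i ≤ m → m ≤ l i →
        dist ((x i : ℕ → X) m) ((y : ℕ → X) m) ≤ ε

/-- The image of a set under a relation. -/
def relImage {X : Type*} (F : Set (X × X)) (A : Set X) : Set X :=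
  {y | ∃ a ∈ A, (a, y) ∈ F}

/-- Composition of relations. -/
def relComp {X : Type*} (F G : Set (X × X)) : Set (X × X) :=
  {p | ∃ z : X, (p.1, z) ∈ F ∧ (z, p.2) ∈ G}

/-- Iterated composition `F^n` of a relation with itself. -/
def relPow {X : Type*} (F : Set (X × X)) : ℕ → Set (X × X)
  | 0 => {p | p.1 = p.2}
  | n + 1 => relComp (relPow F n) F

/-- A finite set `Ω` of positive reals is LF-inducing if it has at least two elements,
all its elements are positive, and it contains elements `ω₁ < 1 < ω₂` that never
connect: `ω₁^k = ω₂^l` (for integers `k, l`) only when `k = l = 0`. -/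
def LFInducing (Ω : Finset ℝ) : Prop :=
  2 ≤ Ω.card ∧ (∀ ω ∈ Ω, 0 < ω) ∧
  ∃ ω₁ ∈ Ω, ∃ ω₂ ∈ Ω, ω₁ < 1 ∧ 1 < ω₂ ∧
    ∀ k l : ℤ, ω₁ ^ k = ω₂ ^ l → k = 0 ∧ l = 0

/-- The relation `F_Ω = {(x,y) ∈ [0,1]² : y = ω·x for some ω ∈ Ω}`. -/
def FOmega (Ω : Finset ℝ) : Set (ℝ × ℝ) :=
  {p | p.1 ∈ Set.Icc (0 : ℝ) 1 ∧ p.2 ∈ Set.Icc (0 : ℝ) 1 ∧ ∃ ω ∈ Ω, p.2 = ω * p.1}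

/-- The finite Mahavier product `⋆_{i=1}^n F`, as a set of `(n+1)`-tuples. -/
def MStar (F : Set (ℝ × ℝ)) (n : ℕ) : Set (Fin (n + 1) → ℝ) :=
  {x | ∀ i : Fin n, (x i.castSucc, x i.succ) ∈ F}

/-- Let `Λ ⊆ Ω` be LF-inducing sets and let `U` be a nonempty set
open in `⋆_{i=1}^n F_Ω`. Then both `π_{n+1,n+2}(U ⋆ F_Λ)` and `π_{0,1}(F_Λ ⋆ U)` contain
nonempty subsets open in `F_Λ`. -/
theorem stmt15 (Ω Λ : Finset ℝ) (hΩ : LFInducing Ω) (hΛ : LFInducing Λ) (hsub : Λ ⊆ Ω)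
    (n : ℕ) (hn : 0 < n) (U : Set (Fin (n + 1) → ℝ)) (hUne : U.Nonempty)
    (hUopen : ∃ V : Set (Fin (n + 1) → ℝ), IsOpen V ∧ U = V ∩ MStar (FOmega Ω) n) :
    (∃ W : Set (ℝ × ℝ), IsOpen W ∧ (W ∩ FOmega Λ).Nonempty ∧
      W ∩ FOmega Λ ⊆ {p : ℝ × ℝ | p ∈ FOmega Λ ∧ ∃ u ∈ U, u (Fin.last n) = p.1}) ∧
    (∃ W : Set (ℝ × ℝ), IsOpen W ∧ (W ∩ FOmega Λ).Nonempty ∧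
      W ∩ FOmega Λ ⊆ {p : ℝ × ℝ | p ∈ FOmega Λ ∧ ∃ u ∈ U, u 0 = p.2}) := by
  obtain ⟨V, hVopen, hUV⟩ := hUopen
  obtain ⟨u, huU⟩ := hUne
  have huVM : u ∈ V ∩ MStar (FOmega Ω) n := hUV ▸ huU
  have huV : u ∈ V := huVM.1
  have huM : u ∈ MStar (FOmega Ω) n := huVM.2
  obtain ⟨_, hΩpos, _⟩ := hΩ
  obtain ⟨_, hΛpos, ωa, haΛ, ωb, hbΛ, ha1, h1b, _⟩ := hΛ
  have hωa : 0 < ωa := hΛpos ωa haΛ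
  have hωb : 0 < ωb := hΛpos ωb hbΛ
  -- multipliers along u
  have hω : ∀ i : Fin n, ∃ ω ∈ Ω, u i.succ = ω * u i.castSucc := fun i => (huM i).2.2
  choose ω hωΩ hωu using hω
  set ω' : ℕ → ℝ := fun i => if h : i < n then ω ⟨i, h⟩ else 1 with hω'def
  have hω'pos : ∀ i, 0 < ω' i := by
    intro i
    simp only [hω'def]
    split
    · exact hΩpos _ (hωΩ _)
    · norm_num
  set P : ℕ → ℝ := fun i => ∏ j ∈ Finset.range i, ω' j with hPdef
  have hPpos : ∀ i, 0 < P i := fun i => Finset.prod_pos fun j _ => hω'pos j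
  have hPsucc : ∀ i, P (i + 1) = P i * ω' i := fun i => Finset.prod_range_succ _ _
  have hP0 : P 0 = 1 := Finset.prod_range_zero _
  -- u lies on the segment t ↦ (P i * t)
  have huP : ∀ i : ℕ, ∀ h : i < n + 1, u ⟨i, h⟩ = P i * u 0 := by
    intro i
    induction i with
    | zero => intro h; simp [hP0]
    | succ i ih =>
      intro h
      have hi : i < n := by omega
      have h1 : (⟨i, hi⟩ : Fin n).succ = ⟨i + 1, h⟩ := rfl
      have h2 : (⟨i, hi⟩ : Fin n).castSucc = ⟨i, by omega⟩ := rfl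
      have := hωu ⟨i, hi⟩
      rw [h1, h2, ih (by omega)] at this
      have hωi : ω' i = ω ⟨i, hi⟩ := by simp [hω'def, hi]
      rw [this, hPsucc, hωi]; ring
  -- all coordinates of u are in [0,1]
  have huIcc : ∀ j : Fin (n + 1), u j ∈ Set.Icc (0 : ℝ) 1 := by
    intro j
    rcases lt_or_ge j.val n with hj | hj
    · have : (⟨j.val, hj⟩ : Fin n).castSucc = j := Fin.ext rfl
      have := (huM ⟨j.val, hj⟩).1
      rwa [show (⟨j.val, hj⟩ : Fin n).castSucc = j from Fin.ext rfl] at this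
    · have hjn : j.val = n := by omega
      have hn1 : n - 1 < n := by omega
      have : (⟨n - 1, hn1⟩ : Fin n).succ = j := by
        apply Fin.ext; simp [hjn]; omega
      have h2 := (huM ⟨n - 1, hn1⟩).2.1
      rwa [this] at h2
  -- the cutoff c
  have hne : (Finset.univ : Finset (Fin (n + 1))).Nonempty := Finset.univ_nonempty
  set c : ℝ := Finset.univ.inf' hne (fun i : Fin (n + 1) => (P i.val)⁻¹) with hcdef
  have hcle : ∀ i : Fin (n + 1), c ≤ (P i.val)⁻¹ :=
    fun i => Finset.inf'_le _ (Finset.mem_univ i)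
  have hcpos : 0 < c := by
    rw [hcdef, Finset.lt_inf'_iff]
    exact fun i _ => inv_pos.mpr (hPpos _)
  have hPc : ∀ i : Fin (n + 1), P i.val * c ≤ 1 := by
    intro i
    calc P i.val * c ≤ P i.val * (P i.val)⁻¹ :=
          mul_le_mul_of_nonneg_left (hcle i) (hPpos _).le
      _ = 1 := mul_inv_cancel₀ (hPpos _).ne'
  have hu0c : u 0 ≤ c := by
    rw [hcdef]
    apply Finset.le_inf'
    intro i _
    have h1 : P i.val * u 0 ≤ 1 := by
      have := (huIcc i).2
      rwa [show u i = P i.val * u 0 from by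
        have := huP i.val i.isLt; rwa [Fin.eta] at this] at this
    rw [← one_div, le_div_iff₀ (hPpos _)]
    nlinarith [h1]
  -- the parametrization and the open set S
  set φ : ℝ → (Fin (n + 1) → ℝ) := fun t j => P j.val * t with hφdef
  have hφcont : Continuous φ := continuous_pi fun j => (continuous_const.mul continuous_id)
  set S : Set ℝ := φ ⁻¹' V with hSdef
  have hSopen : IsOpen S := hVopen.preimage hφcont
  have hu0S : u 0 ∈ S := by
    have : φ (u 0) = u := by
      funext j
      have := huP j.val j.isLt
      rw [Fin.eta] at this
      exact this.symm
    simp only [hSdef, Set.mem_preimage, this]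
    exact huV
  -- find an interior parameter
  have hu0cl : u 0 ∈ closure (Set.Ioo (0 : ℝ) c) := by
    rw [closure_Ioo hcpos.ne]
    exact ⟨(huIcc 0).1, hu0c⟩
  obtain ⟨t, htS, htIoo⟩ := _root_.mem_closure_iff.mp hu0cl S hSopen hu0S
  obtain ⟨δ, hδpos, hδball⟩ := Metric.isOpen_iff.mp (hSopen.inter isOpen_Ioo) t ⟨htS, htIoo⟩
  -- key: every parameter near t gives a point of U
  have hkey : ∀ s : ℝ, |s - t| < δ → φ s ∈ U ∧ 0 < s ∧ s < c := by
    intro s hs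
    have hsball : s ∈ Metric.ball t δ := by rwa [Metric.mem_ball, Real.dist_eq]
    have hsmem := hδball hsball
    obtain ⟨hsS, hs0, hsc⟩ := hsmem
    refine ⟨?_, hs0, hsc⟩
    rw [hUV]
    refine ⟨hsS, ?_⟩
    intro i
    have hcoord : ∀ j : Fin (n + 1), P j.val * s ∈ Set.Icc (0 : ℝ) 1 := by
      intro j
      constructor
      · exact mul_nonneg (hPpos _).le hs0.le
      · calc P j.val * s ≤ P j.val * c :=
              mul_le_mul_of_nonneg_left hsc.le (hPpos _).le
          _ ≤ 1 := hPc j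
    refine ⟨hcoord i.castSucc, hcoord i.succ, ω i, hωΩ i, ?_⟩
    have hωi : ω' i.val = ω i := by
      simp only [hω'def, i.isLt, dif_pos, Fin.eta]
    show P i.succ.val * s = ω i * (P i.castSucc.val * s)
    rw [Fin.val_succ, Fin.coe_castSucc, hPsucc, hωi]; ring
  have hPn : 0 < P n := hPpos n
  constructor
  · -- first part: last coordinate
    refine ⟨(fun p : ℝ × ℝ => p.1) ⁻¹' Metric.ball (P n * t) (P n * δ),
      Metric.isOpen_ball.preimage continuous_fst, ?_, ?_⟩
    · refine ⟨(P n * t, ωa * (P n * t)), ?_, ?_⟩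
      · exact Metric.mem_ball_self (mul_pos hPn hδpos)
      · have h1 : P n * t ∈ Set.Icc (0 : ℝ) 1 := by
          constructor
          · exact mul_nonneg hPn.le htIoo.1.le
          · calc P n * t ≤ P n * c := mul_le_mul_of_nonneg_left htIoo.2.le hPn.le
              _ ≤ 1 := hPc (Fin.last n)
        exact ⟨h1, ⟨mul_nonneg hωa.le h1.1, by show ωa * (P n * t) ≤ 1; nlinarith [h1.1, h1.2, mul_nonneg (sub_nonneg.mpr ha1.le) h1.1]⟩, ωa, haΛ, rfl⟩
    · rintro p ⟨hpW, hpF⟩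
      refine ⟨hpF, φ (p.1 / P n), ?_, ?_⟩
      · apply (hkey (p.1 / P n) ?_).1
        have : dist p.1 (P n * t) < P n * δ := hpW
        rw [Real.dist_eq] at this
        have heq : p.1 / P n - t = (p.1 - P n * t) / P n := by field_simp
        rw [heq, abs_div, abs_of_pos hPn, div_lt_iff₀ hPn]
        linarith [this]
      · show P (Fin.last n).val * (p.1 / P n) = p.1
        rw [Fin.val_last]
        field_simp
  · -- second part: first coordinate
    refine ⟨(fun p : ℝ × ℝ => p.2) ⁻¹' Metric.ball t δ,
      Metric.isOpen_ball.preimage continuous_snd, ?_, ?_⟩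
    · refine ⟨(t / ωb, t), Metric.mem_ball_self hδpos, ?_⟩
      have htc1 : t ≤ 1 := by
        have := hcle 0
        have hP0' : P (0 : Fin (n + 1)).val = 1 := hP0
        rw [hP0'] at this
        simp at this
        linarith [htIoo.2]
      refine ⟨⟨div_nonneg htIoo.1.le hωb.le, ?_⟩, ⟨htIoo.1.le, htc1⟩, ωb, hbΛ, ?_⟩
      · calc t / ωb ≤ t := div_le_self htIoo.1.le h1b.le
          _ ≤ 1 := htc1
      · rw [mul_div_cancel₀ _ hωb.ne']
    · rintro p ⟨hpW, hpF⟩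
      refine ⟨hpF, φ p.2, ?_, ?_⟩
      · apply (hkey p.2 ?_).1
        have : dist p.2 t < δ := hpW
        rwa [Real.dist_eq] at this
      · show P (0 : Fin (n + 1)).val * p.2 = p.2
        rw [show ((0 : Fin (n + 1)) : ℕ) = 0 from rfl, hP0, one_mul]
end

section
/- Let Ω and Λ be LF-inducing sets with Λ ⊆ Ω. (1) If the two-sided Mahavier dynamical system (I_{F_Λ}, σ_{F_Λ}) is topologically transitive, then (I_{F_Ω}, σ_{F_Ω}) is topologically transitive. (2) If (I_{F_Λ}, σ_{F_Λ}) is topologically mixing, then (I_{F_Ω}, σ_{F_Ω}) is topologically mixing. -/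
open Set Filter Topology

/-!
A sequence in `I_{F_Ω}` is either identically `0` or everywhere positive, and near `0` there are
positive "tents", so every nonempty open set contains an everywhere positive point `x` together
with a cylinder around it. Multiplying
`x` by some `r` slightly below `1` keeps it in that cylinder, and two orbits can be glued at any
time where they agree. So it suffices to connect `r x` at time `N` to a rescaled target `s v` at
time `n - N` by some orbit.

For transitivity, go down `k` times by `ω₁` and then up `l` times by `ω₂`: since
`log ω₁ / log ω₂` is irrational, the numbers `k log ω₁ + l log ω₂` with `k, l ∈ ℕ` are dense
in `ℝ`, so the endpoint can be put within a factor `r` below any prescribed level.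

For mixing, the connecting orbit comes from the `Λ`-system: for all large `n` it has an orbit
passing through the windows `(r a, a)` at time `N` and `(r b, b)` at time `n - N`, and this orbit,
rescaled, is an orbit of the `Ω`-system because `Λ ⊆ Ω`.
-/

open Real

theorem exists_nat_mul_add_nat_mul_mem_Ioo {α β : ℝ} (hα : α < 0) (hβ : 0 < β)
    (hαβ : Irrational (α / β)) (c : ℝ) {ε : ℝ} (hε : 0 < ε) :
    ∃ k l : ℕ, (k : ℝ) * α + l * β ∈ Ioo (c - ε) c := by
  suffices h : ∀ c, 0 ≤ c → ∀ ε, 0 < ε → ε ≤ β →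
      ∃ k l : ℕ, (k : ℝ) * α + l * β ∈ Ioo (c - ε) c by
    -- absorb a large multiple `K α` into the target to make it nonnegative
    obtain ⟨K, hK⟩ := exists_nat_ge (c / α)
    have hc : 0 ≤ c - K * α := by rw [div_le_iff_of_neg hα] at hK; linarith
    obtain ⟨k, l, hkl⟩ := h _ hc (min ε β) (lt_min hε hβ) (min_le_right _ _)
    refine ⟨k + K, l, ?_, ?_⟩ <;> push_cast <;> linarith [hkl.1, hkl.2, min_le_left ε β]
  intro c hc ε hε hεβ
  have := Fact.mk hβ
  have hdense : DenseRange fun n : ℕ => n • (α : AddCircle β) :=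
    denseRange_zsmul_iff_nsmul.mp (AddCircle.denseRange_zsmul_coe_iff.mpr hαβ)
  obtain ⟨n, y, hy, hny⟩ := hdense.exists_mem_open
    (QuotientAddGroup.isOpenMap_coe _ (isOpen_Ioo (a := c - ε) (b := c)))
    ((nonempty_Ioo.mpr (sub_lt_self c hε)).image _)
  obtain ⟨m, hm⟩ := (AddCircle.coe_eq_zero_iff β).mp
    (by rw [QuotientAddGroup.mk_sub, hny, ← AddCircle.coe_nsmul, sub_self] :
      ((y - n • α : ℝ) : AddCircle β) = 0)
  rw [zsmul_eq_mul, nsmul_eq_mul] at hm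
  -- `m β = y - n α > -ε ≥ -β` because `c ≥ 0` and `n α ≤ 0`
  have hm0 : 0 ≤ m := by
    have hnα : (n : ℝ) * α ≤ 0 := mul_nonpos_of_nonneg_of_nonpos n.cast_nonneg hα.le
    have : (-1 : ℝ) < m := lt_of_mul_lt_mul_right (by linarith [hy.1]) hβ.le
    have : (-1 : ℤ) < m := by exact_mod_cast this
    omega
  refine ⟨n, m.toNat, ?_⟩
  rwa [show ((m.toNat : ℕ) : ℝ) = m by exact_mod_cast Int.toNat_of_nonneg hm0,
    show (n : ℝ) * α + m * β = y by linarith]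

theorem exists_mem_Ioo_one_sub_lt_mul_self {δ : ℝ} (hδ : 0 < δ) :
    ∃ r ∈ Ioo (0 : ℝ) 1, 1 - δ < r * r :=
  ⟨1 - min δ 1 / 2, ⟨by linarith [min_le_right δ 1], by linarith [lt_min hδ one_pos]⟩,
    by nlinarith [min_le_left δ 1, min_le_right δ 1, lt_min hδ one_pos]⟩

theorem irrational_log_div_log {ω₁ ω₂ : ℝ} (h₁ : ω₁ ∈ Ioo 0 1) (h₂ : 1 < ω₂)
    (hLF : ∀ k l : ℤ, ω₁ ^ k = ω₂ ^ l → k = 0 ∧ l = 0) : Irrational (log ω₁ / log ω₂) := by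
  rintro ⟨q, hq⟩
  have hβ : log ω₂ ≠ 0 := (log_pos h₂).ne'
  have hpow : ω₁ ^ (q.den : ℤ) = ω₂ ^ q.num := by
    refine log_injOn_pos (zpow_pos h₁.1 _) (zpow_pos (by linarith : (0 : ℝ) < ω₂) _) ?_
    rw [Rat.cast_def, div_eq_div_iff (by positivity) hβ] at hq
    rw [log_zpow, log_zpow]
    push_cast
    linarith
  exact q.den_nz (by exact_mod_cast (hLF _ _ hpow).1)

theorem exists_mul_pow_mul_pow_mem_Ioo {ω₁ ω₂ : ℝ} (h₁ : ω₁ ∈ Ioo 0 1) (h₂ : 1 < ω₂)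
    (hLF : ∀ k l : ℤ, ω₁ ^ k = ω₂ ^ l → k = 0 ∧ l = 0) {a b r : ℝ} (ha : 0 < a) (hb : 0 < b)
    (hr : r ∈ Ioo 0 1) :
    ∃ k l : ℕ, a * ω₁ ^ k * ω₂ ^ l ∈ Ioo (r * b) b := by
  obtain ⟨k, l, hkl⟩ := exists_nat_mul_add_nat_mul_mem_Ioo (log_neg h₁.1 h₁.2) (log_pos h₂)
    (irrational_log_div_log h₁ h₂ hLF) (log b - log a) (neg_pos.2 (log_neg hr.1 hr.2))
  have hω₁ : 0 < ω₁ := h₁.1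
  have hω₂ : 0 < ω₂ := by linarith
  have hlog : log (a * ω₁ ^ k * ω₂ ^ l) = log a + (k * log ω₁ + l * log ω₂) := by
    rw [log_mul (by positivity) (by positivity), log_mul ha.ne' (by positivity), log_pow,
      log_pow]
    ring
  refine ⟨k, l, ?_, ?_⟩
  · rw [← log_lt_log_iff (mul_pos hr.1 hb) (by positivity), hlog, log_mul hr.1.ne' hb.ne']
    linarith [hkl.1]
  · rw [← log_lt_log_iff (by positivity) hb, hlog]
    linarith [hkl.2]

namespace Mahavier

section Relation

variable {X : Type*} {F G : Set (X × X)} {x y : ℤ → X}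

theorem mahavierTwo_mono (h : F ⊆ G) : MahavierTwo F ⊆ MahavierTwo G :=
  fun _ hx n => h (hx n)

theorem comp_add_mem (hx : x ∈ MahavierTwo F) (d : ℤ) :
    (fun m => x (m + d)) ∈ MahavierTwo F := by
  intro n
  simpa only [add_right_comm n d 1] using hx (n + d)

theorem iterate_shiftTwo_apply (x : MahavierTwo F) (n : ℕ) (m : ℤ) :
    ((shiftTwo F)^[n] x : ℤ → X) m = (x : ℤ → X) (m + n) := by
  induction n generalizing x with
  | zero => simp
  | succ k ih =>
    rw [Function.iterate_succ_apply, ih]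
    simp only [shiftTwo, Nat.cast_add, Nat.cast_one]
    ring_nf

def glue (x y : ℤ → X) (j : ℤ) : ℤ → X := fun m => if m ≤ j then x m else y m

theorem glue_of_le {j m : ℤ} (h : m ≤ j) : glue x y j m = x m := if_pos h

theorem glue_of_ge {j m : ℤ} (hxy : x j = y j) (h : j ≤ m) : glue x y j m = y m := by
  rcases h.lt_or_eq with h | rfl
  · exact if_neg h.not_ge
  · exact (if_pos le_rfl).trans hxy

theorem glue_mem (hx : x ∈ MahavierTwo F) (hy : y ∈ MahavierTwo F) {j : ℤ} (hxy : x j = y j) :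
    glue x y j ∈ MahavierTwo F := by
  intro n
  rcases le_or_gt (n + 1) j with h | h
  · rw [glue_of_le h, glue_of_le (by omega)]
    exact hx n
  · rw [glue_of_ge hxy (by omega), glue_of_ge hxy (by omega)]
    exact hy n

theorem isOpen_setOf_apply_mem [TopologicalSpace X] (j : ℤ) {O : Set X} (hO : IsOpen O) :
    IsOpen {y : MahavierTwo F | (y : ℤ → X) j ∈ O} :=
  hO.preimage ((continuous_apply j).comp continuous_subtype_val)

end Relation

section Cylinder

variable {X : Type*} [PseudoMetricSpace X]

def cylinder (x : ℤ → X) (N : ℕ) (δ : ℝ) : Set (ℤ → X) :=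
  {y | ∀ i : ℤ, i.natAbs ≤ N → dist (y i) (x i) < δ}

theorem cylinder_anti {x : ℤ → X} {N N' : ℕ} {δ δ' : ℝ} (hN : N ≤ N') (hδ : δ' ≤ δ) :
    cylinder x N' δ' ⊆ cylinder x N δ :=
  fun _ hy i hi => (hy i (hi.trans hN)).trans_le hδ

theorem cylinder_subset_cylinder {x x' : ℤ → X} {N : ℕ} {ε ε' δ : ℝ}
    (hx' : x' ∈ cylinder x N ε) (h : ε + ε' ≤ δ) : cylinder x' N ε' ⊆ cylinder x N δ :=
  fun y hy i hi => by linarith [dist_triangle (y i) (x' i) (x i), hy i hi, hx' i hi]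

theorem exists_cylinder_subset {F : Set (X × X)} {U : Set (MahavierTwo F)} (hU : IsOpen U)
    {x : MahavierTwo F} (hx : x ∈ U) :
    ∃ (N : ℕ) (δ : ℝ), 0 < δ ∧ Subtype.val ⁻¹' cylinder (x : ℤ → X) N δ ⊆ U := by
  have hUx : U ∈ comap Subtype.val (𝓝 (x : ℤ → X)) := nhds_subtype _ x ▸ hU.mem_nhds hx
  obtain ⟨t, ht, htU⟩ := mem_comap.mp hUx
  rw [nhds_pi, Filter.mem_pi] at ht
  obtain ⟨I, hI, s, hs, hIs⟩ := ht
  have hballs : ∀ᶠ δ in 𝓝[>] (0 : ℝ), ∀ i ∈ I, Metric.ball ((x : ℤ → X) i) δ ⊆ s i := by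
    refine hI.eventually_all.2 fun i _ => ?_
    obtain ⟨ε, hε, hball⟩ := Metric.mem_nhds_iff.1 (hs i)
    filter_upwards [Ioo_mem_nhdsGT hε] with δ hδ
    exact (Metric.ball_subset_ball hδ.2.le).trans hball
  obtain ⟨δ, hδ, hδpos⟩ := (hballs.and self_mem_nhdsWithin).exists
  obtain ⟨N, hN⟩ := (hI.image Int.natAbs).bddAbove
  exact ⟨N, δ, hδpos, fun y hy =>
    htU (hIs fun i hi => hδ i hi (hy i (hN (mem_image_of_mem _ hi))))⟩

end Cylinder

theorem dist_mul_self_lt {t u δ : ℝ} (ht : t ∈ Ioc (1 - δ) 1) (hu : u ∈ Icc (0 : ℝ) 1) :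
    dist (t * u) u < δ := by
  rw [Real.dist_eq, show t * u - u = -((1 - t) * u) by ring, abs_neg,
    abs_of_nonneg (mul_nonneg (by linarith [ht.2]) hu.1)]
  nlinarith [ht.1, ht.2, hu.1, hu.2]

section FOmega

variable {S : Finset ℝ} {x : ℤ → ℝ}

theorem fOmega_mono {Λ Ω : Finset ℝ} (h : Λ ⊆ Ω) : FOmega Λ ⊆ FOmega Ω :=
  fun _ ⟨h₁, h₂, ω, hω, he⟩ => ⟨h₁, h₂, ω, h hω, he⟩

theorem apply_mem_Icc (hx : x ∈ MahavierTwo (FOmega S)) (n : ℤ) : x n ∈ Icc (0 : ℝ) 1 :=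
  (hx n).1

theorem const_mul_mem (hx : x ∈ MahavierTwo (FOmega S)) {t : ℝ} (ht : t ∈ Icc (0 : ℝ) 1) :
    (fun m => t * x m) ∈ MahavierTwo (FOmega S) := by
  have hb : ∀ n, t * x n ∈ Icc (0 : ℝ) 1 := fun n =>
    ⟨mul_nonneg ht.1 (hx n).1.1, mul_le_one₀ ht.2 (hx n).1.1 (hx n).1.2⟩
  intro n
  obtain ⟨-, -, ω, hω, he : x (n + 1) = ω * x n⟩ := hx n
  exact ⟨hb n, hb (n + 1), ω, hω, show t * x (n + 1) = ω * (t * x n) by rw [he]; ring⟩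

theorem pos_or_eq_zero (hS : ∀ ω ∈ S, 0 < ω) (hx : x ∈ MahavierTwo (FOmega S)) :
    (∀ m, 0 < x m) ∨ ∀ m, x m = 0 := by
  have hstep : ∀ n, x (n + 1) = 0 ↔ x n = 0 := fun n => by
    obtain ⟨-, -, ω, hω, he : x (n + 1) = ω * x n⟩ := hx n
    rw [he, mul_eq_zero, or_iff_right (hS ω hω).ne']
  have hzero : ∀ m, x m = 0 ↔ x 0 = 0 := fun m => by
    induction m using Int.induction_on with
    | zero => rfl
    | succ i ih => rw [hstep, ih]
    | pred i ih => rw [← hstep, sub_add_cancel, ih]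
  by_cases h : x 0 = 0
  · exact .inr fun m => (hzero m).2 h
  · exact .inl fun m => (apply_mem_Icc hx m).1.lt_of_ne fun h' => h ((hzero m).1 h'.symm)

end FOmega

section Tent

variable {S : Finset ℝ} {ω₁ ω₂ s : ℝ} {j m : ℤ}

noncomputable def tent (ω₁ ω₂ s : ℝ) (j : ℤ) : ℤ → ℝ :=
  fun m => if m ≤ j then s * ω₂ ^ (m - j) else s * ω₁ ^ (m - j)

theorem tent_of_le (h : m ≤ j) : tent ω₁ ω₂ s j m = s * ω₂ ^ (m - j) := if_pos h

theorem tent_of_ge (h : j ≤ m) : tent ω₁ ω₂ s j m = s * ω₁ ^ (m - j) := by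
  rcases h.lt_or_eq with h | rfl
  · exact if_neg h.not_ge
  · simp [tent]

theorem tent_self : tent ω₁ ω₂ s j j = s := by simp [tent]

theorem tent_mem_Ioc (h₁ : ω₁ ∈ Ioo 0 1) (h₂ : 1 < ω₂) (hs : 0 < s) (j m : ℤ) :
    tent ω₁ ω₂ s j m ∈ Ioc 0 s := by
  rcases le_total m j with h | h
  · rw [tent_of_le h]
    exact ⟨mul_pos hs (zpow_pos (by linarith) _),
      mul_le_of_le_one_right hs.le (zpow_le_one_of_nonpos₀ h₂.le (by omega))⟩
  · rw [tent_of_ge h]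
    exact ⟨mul_pos hs (zpow_pos h₁.1 _),
      mul_le_of_le_one_right hs.le (zpow_le_one₀ h₁.1 h₁.2.le (by omega))⟩

theorem tent_mem (hω₁ : ω₁ ∈ S) (hω₂ : ω₂ ∈ S) (h₁ : ω₁ ∈ Ioo 0 1) (h₂ : 1 < ω₂)
    (hs : s ∈ Ioc 0 1) (j : ℤ) : tent ω₁ ω₂ s j ∈ MahavierTwo (FOmega S) := by
  intro n
  have hb : ∀ m, tent ω₁ ω₂ s j m ∈ Icc (0 : ℝ) 1 := fun m =>
    ⟨(tent_mem_Ioc h₁ h₂ hs.1 j m).1.le, (tent_mem_Ioc h₁ h₂ hs.1 j m).2.trans hs.2⟩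
  refine ⟨hb n, hb (n + 1), ?_⟩
  show ∃ ω ∈ S, tent ω₁ ω₂ s j (n + 1) = ω * tent ω₁ ω₂ s j n
  rcases lt_or_ge n j with h | h
  · refine ⟨ω₂, hω₂, ?_⟩
    rw [tent_of_le (by omega : n + 1 ≤ j), tent_of_le h.le, add_sub_right_comm,
      zpow_add_one₀ (by linarith)]
    ring
  · refine ⟨ω₁, hω₁, ?_⟩
    rw [tent_of_ge (by omega : j ≤ n + 1), tent_of_ge h, add_sub_right_comm,
      zpow_add_one₀ h₁.1.ne']
    ring

theorem nonempty_setOf_apply_mem_Ioo (hω₁ : ω₁ ∈ S) (hω₂ : ω₂ ∈ S) (h₁ : ω₁ ∈ Ioo 0 1)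
    (h₂ : 1 < ω₂) {p q : ℝ} (hp : 0 ≤ p) (hpq : p < q) (hq : q ≤ 1) (j : ℤ) :
    {y : MahavierTwo (FOmega S) | (y : ℤ → ℝ) j ∈ Ioo p q}.Nonempty :=
  ⟨⟨tent ω₁ ω₂ ((p + q) / 2) j, tent_mem hω₁ hω₂ h₁ h₂ ⟨by linarith, by linarith⟩ j⟩,
    show tent ω₁ ω₂ ((p + q) / 2) j j ∈ Ioo p q by rw [tent_self]; constructor <;> linarith⟩

theorem exists_mem_apply_eq_and_apply_add_eq (hω₁ : ω₁ ∈ S) (hω₂ : ω₂ ∈ S)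
    (h₁ : ω₁ ∈ Ioo 0 1) (h₂ : 1 < ω₂) {a : ℝ} (ha : a ∈ Ioc 0 1) (k l : ℕ)
    (hc : a * ω₁ ^ k * ω₂ ^ l ≤ 1) (j : ℤ) :
    ∃ z ∈ MahavierTwo (FOmega S), z j = a ∧ z (j + k + l) = a * ω₁ ^ k * ω₂ ^ l := by
  have hω₂0 : ω₂ ≠ 0 := by positivity
  have hc0 : 0 < a * ω₁ ^ k * ω₂ ^ l :=
    mul_pos (mul_pos ha.1 (pow_pos h₁.1 k)) (pow_pos (by linarith) l)
  have hagree :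
      tent ω₁ ω₂ a j (j + k) = tent ω₁ ω₂ (a * ω₁ ^ k * ω₂ ^ l) (j + k + l) (j + k) := by
    rw [tent_of_ge (by omega), tent_of_le (by omega), show j + k - j = (k : ℤ) by ring,
      show j + k - (j + k + l) = -(l : ℤ) by ring, zpow_neg, zpow_natCast, zpow_natCast]
    field_simp
  refine ⟨_, glue_mem (tent_mem hω₁ hω₂ h₁ h₂ ha j) (tent_mem hω₁ hω₂ h₁ h₂ ⟨hc0, hc⟩ _) hagree,
    ?_, ?_⟩
  · rw [glue_of_le (by omega), tent_self]
  · rw [glue_of_ge hagree (by omega), tent_self]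

end Tent

section Dynamics

variable {S : Finset ℝ} {ω₁ ω₂ : ℝ}

theorem exists_pos_cylinder_subset (hS : ∀ ω ∈ S, 0 < ω) (hω₁ : ω₁ ∈ S) (hω₂ : ω₂ ∈ S)
    (h₁ : ω₁ ∈ Ioo 0 1) (h₂ : 1 < ω₂) {U : Set (MahavierTwo (FOmega S))} (hU : IsOpen U)
    (hne : U.Nonempty) :
    ∃ x : MahavierTwo (FOmega S), (∀ m, 0 < (x : ℤ → ℝ) m) ∧
      ∃ (N : ℕ) (δ : ℝ), 0 < δ ∧ Subtype.val ⁻¹' cylinder (x : ℤ → ℝ) N δ ⊆ U := by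
  obtain ⟨x₀, hx₀⟩ := hne
  obtain ⟨N, δ, hδ, hx₀U⟩ := exists_cylinder_subset hU hx₀
  rcases pos_or_eq_zero hS x₀.2 with hpos | hzero
  · exact ⟨x₀, hpos, N, δ, hδ, hx₀U⟩
  -- replace the zero orbit by a tent lower than `δ / 2`
  set s := min (δ / 4) 1
  have hs : s ∈ Ioc 0 1 := ⟨lt_min (by linarith) one_pos, min_le_right _ _⟩
  have hT := tent_mem_Ioc h₁ h₂ hs.1 0
  refine ⟨⟨tent ω₁ ω₂ s 0, tent_mem hω₁ hω₂ h₁ h₂ hs 0⟩, fun m => (hT m).1, N, δ / 2,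
    by linarith, (preimage_mono (cylinder_subset_cylinder (ε := δ / 2) (fun i _ => ?_)
      (by linarith))).trans hx₀U⟩
  rw [hzero i, Real.dist_0_eq_abs, abs_of_pos (hT i).1]
  linarith [(hT i).2, min_le_left (δ / 4) 1]

theorem exists_pos_cylinder_subset₂ (hS : ∀ ω ∈ S, 0 < ω) (hω₁ : ω₁ ∈ S) (hω₂ : ω₂ ∈ S)
    (h₁ : ω₁ ∈ Ioo 0 1) (h₂ : 1 < ω₂) {U V : Set (MahavierTwo (FOmega S))} (hU : IsOpen U)
    (hV : IsOpen V) (hUne : U.Nonempty) (hVne : V.Nonempty) :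
    ∃ (x v : MahavierTwo (FOmega S)) (N : ℕ) (δ : ℝ), 0 < δ ∧
      (∀ m, 0 < (x : ℤ → ℝ) m) ∧ (∀ m, 0 < (v : ℤ → ℝ) m) ∧
      Subtype.val ⁻¹' cylinder (x : ℤ → ℝ) N δ ⊆ U ∧
      Subtype.val ⁻¹' cylinder (v : ℤ → ℝ) N δ ⊆ V := by
  obtain ⟨x, hx, Nx, δx, hδx, hxU⟩ := exists_pos_cylinder_subset hS hω₁ hω₂ h₁ h₂ hU hUne
  obtain ⟨v, hv, Nv, δv, hδv, hvV⟩ := exists_pos_cylinder_subset hS hω₁ hω₂ h₁ h₂ hV hVne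
  exact ⟨x, v, max Nx Nv, min δx δv, lt_min hδx hδv, hx, hv,
    (preimage_mono (cylinder_anti (le_max_left _ _) (min_le_left _ _))).trans hxU,
    (preimage_mono (cylinder_anti (le_max_right _ _) (min_le_right _ _))).trans hvV⟩

theorem image_iterate_inter_nonempty {U V : Set (MahavierTwo (FOmega S))}
    {x v : MahavierTwo (FOmega S)} {N n : ℕ} {δ r s : ℝ}
    (hxU : Subtype.val ⁻¹' cylinder (x : ℤ → ℝ) N δ ⊆ U)
    (hvV : Subtype.val ⁻¹' cylinder (v : ℤ → ℝ) N δ ⊆ V)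
    (hr : r ∈ Ioc (1 - δ) 1) (hr0 : 0 ≤ r) (hs : s ∈ Ioc (1 - δ) 1) (hs0 : 0 ≤ s)
    (hn : 2 * N ≤ n) {z : ℤ → ℝ} (hz : z ∈ MahavierTwo (FOmega S))
    (hzx : z N = r * (x : ℤ → ℝ) N) (hzv : z (n - N) = s * (v : ℤ → ℝ) (-N)) :
    ((shiftTwo (FOmega S))^[n] '' U ∩ V).Nonempty := by
  set x' : ℤ → ℝ := fun m => r * (x : ℤ → ℝ) m
  set v' : ℤ → ℝ := fun m => s * (v : ℤ → ℝ) (m + -n)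
  have hx' : x' ∈ MahavierTwo (FOmega S) := const_mul_mem x.2 ⟨hr0, hr.2⟩
  have hv' : v' ∈ MahavierTwo (FOmega S) := const_mul_mem (comp_add_mem v.2 (-n)) ⟨hs0, hs.2⟩
  have hxz : x' N = z N := hzx.symm
  have hzv' : glue x' z N (n - N) = v' (n - N) := by
    rw [glue_of_ge hxz (by omega), hzv]
    simp only [v', show (n : ℤ) - N + -n = -N by ring]
  have hw := glue_mem (glue_mem hx' hz hxz) hv' hzv'
  refine ⟨_, ⟨⟨_, hw⟩, hxU fun i hi => ?_, rfl⟩, hvV fun i hi => ?_⟩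
  · show dist (glue (glue x' z N) v' (n - N) i) ((x : ℤ → ℝ) i) < δ
    rw [glue_of_le (by omega), glue_of_le (by omega)]
    exact dist_mul_self_lt hr (apply_mem_Icc x.2 i)
  · rw [iterate_shiftTwo_apply]
    show dist (glue (glue x' z N) v' (n - N) (i + n)) ((v : ℤ → ℝ) i) < δ
    rw [glue_of_ge hzv' (by omega)]
    simp only [v', add_neg_cancel_right]
    exact dist_mul_self_lt hs (apply_mem_Icc v.2 i)

end Dynamics

end Mahavier

open Mahavier

theorem topTransitive_shiftTwo_fOmega {Ω : Finset ℝ} (hΩ : LFInducing Ω) :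
    TopTransitive (shiftTwo (FOmega Ω)) := by
  obtain ⟨-, hpos, ω₁, hω₁, ω₂, hω₂, h₁, h₂, hLF⟩ := hΩ
  have h₁' : ω₁ ∈ Ioo 0 1 := ⟨hpos ω₁ hω₁, h₁⟩
  intro U V hU hV hUne hVne
  obtain ⟨x, v, N, δ, hδ, hx, hv, hxU, hvV⟩ :=
    exists_pos_cylinder_subset₂ hpos hω₁ hω₂ h₁' h₂ hU hV hUne hVne
  obtain ⟨r, hr, hrδ⟩ := exists_mem_Ioo_one_sub_lt_mul_self hδ
  have hrδ' : 1 - δ < r := hrδ.trans (mul_lt_of_lt_one_left hr.1 hr.2)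
  have hra : r * (x : ℤ → ℝ) N ∈ Ioc 0 1 :=
    ⟨mul_pos hr.1 (hx N), mul_le_one₀ hr.2.le (hx N).le (apply_mem_Icc x.2 N).2⟩
  set b := (v : ℤ → ℝ) (-N)
  have hb : 0 < b := hv (-N)
  obtain ⟨k, l, hc⟩ := exists_mul_pow_mul_pow_mem_Ioo h₁' h₂ hLF hra.1 hb hr
  obtain ⟨z, hz, hzx, hzv⟩ := exists_mem_apply_eq_and_apply_add_eq hω₁ hω₂ h₁' h₂ hra k l
    (hc.2.le.trans (apply_mem_Icc v.2 (-N)).2) N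
  set c := r * (x : ℤ → ℝ) N * ω₁ ^ k * ω₂ ^ l
  have hcb : c / b ∈ Ioc (1 - δ) 1 :=
    ⟨by rw [lt_div_iff₀ hb]; linarith [hc.1, mul_lt_mul_of_pos_right hrδ' hb],
      ((div_lt_one hb).2 hc.2).le⟩
  refine ⟨2 * N + k + l, image_iterate_inter_nonempty hxU hvV ⟨hrδ', hr.2.le⟩
    hr.1.le hcb (div_pos ((mul_pos hr.1 hb).trans hc.1) hb).le (by omega) hz hzx ?_⟩
  rw [show ((2 * N + k + l : ℕ) : ℤ) - N = N + k + l by push_cast; ring, hzv,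
    div_mul_cancel₀ _ hb.ne']

theorem topMixing_shiftTwo_fOmega_of_subset {Ω Λ : Finset ℝ} (hΩ : LFInducing Ω)
    (hΛ : LFInducing Λ) (hsub : Λ ⊆ Ω) (hmix : TopMixing (shiftTwo (FOmega Λ))) :
    TopMixing (shiftTwo (FOmega Ω)) := by
  obtain ⟨-, hpos, ω₁, hω₁, ω₂, hω₂, h₁, h₂, -⟩ := hΩ
  obtain ⟨-, hposΛ, ν₁, hν₁, ν₂, hν₂, hν₁1, hν₂1, -⟩ := hΛ
  intro U V hU hV hUne hVne
  obtain ⟨x, v, N, δ, hδ, hx, hv, hxU, hvV⟩ :=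
    exists_pos_cylinder_subset₂ hpos hω₁ hω₂ ⟨hpos ω₁ hω₁, h₁⟩ h₂ hU hV hUne hVne
  obtain ⟨r, hr, hrδ⟩ := exists_mem_Ioo_one_sub_lt_mul_self hδ
  have hrδ' : 1 - δ < r := hrδ.trans (mul_lt_of_lt_one_left hr.1 hr.2)
  set a := (x : ℤ → ℝ) N
  set b := (v : ℤ → ℝ) (-N)
  have ha : a ∈ Ioc 0 1 := ⟨hx N, (apply_mem_Icc x.2 N).2⟩
  have hb : b ∈ Ioc 0 1 := ⟨hv (-N), (apply_mem_Icc v.2 (-N)).2⟩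
  have window : ∀ {c} (j : ℤ), c ∈ Ioc 0 1 →
      {ζ : MahavierTwo (FOmega Λ) | (ζ : ℤ → ℝ) j ∈ Ioo (r * c) c}.Nonempty := fun j hc =>
    nonempty_setOf_apply_mem_Ioo hν₁ hν₂ ⟨hposΛ ν₁ hν₁, hν₁1⟩ hν₂1
      (mul_pos hr.1 hc.1).le (mul_lt_of_lt_one_left hc.1 hr.2) hc.2 j
  obtain ⟨n₀, hn₀⟩ := hmix _ _ (isOpen_setOf_apply_mem N isOpen_Ioo)
    (isOpen_setOf_apply_mem (-N) isOpen_Ioo) (window N ha) (window (-N) hb)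
  refine ⟨max n₀ (2 * N), fun n hn => ?_⟩
  obtain ⟨_, ⟨ζ, hζN, rfl⟩, hζn⟩ := hn₀ n (le_of_max_le_left hn)
  replace hζn : (ζ : ℤ → ℝ) (n - N) ∈ Ioo (r * b) b := by
    rwa [mem_ofPred, iterate_shiftTwo_apply, neg_add_eq_sub] at hζn
  have hζN0 : 0 < (ζ : ℤ → ℝ) N := (mul_pos hr.1 ha.1).trans hζN.1
  set f := r * a / (ζ : ℤ → ℝ) N
  have hf : f ∈ Ioo r 1 :=
    ⟨(lt_div_iff₀ hζN0).2 (mul_lt_mul_of_pos_left hζN.2 hr.1), (div_lt_one hζN0).2 hζN.1⟩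
  have hz := const_mul_mem (mahavierTwo_mono (fOmega_mono hsub) ζ.2)
    ⟨hr.1.le.trans hf.1.le, hf.2.le⟩
  have hζn0 : 0 < (ζ : ℤ → ℝ) (n - N) := (mul_pos hr.1 hb.1).trans hζn.1
  set s := f * (ζ : ℤ → ℝ) (n - N) / b
  have hs : s ∈ Ioc (1 - δ) 1 := by
    constructor
    · rw [lt_div_iff₀ hb.1]
      linarith [mul_lt_mul_of_pos_right hf.1 hζn0, mul_lt_mul_of_pos_left hζn.1 hr.1,
        mul_lt_mul_of_pos_right hrδ hb.1]
    · rw [div_le_one hb.1]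
      linarith [mul_lt_mul_of_pos_right hf.2 hζn0, hζn.2]
  exact image_iterate_inter_nonempty hxU hvV ⟨hrδ', hr.2.le⟩ hr.1.le hs
    (div_pos (mul_pos (hr.1.trans hf.1) hζn0) hb.1).le (le_of_max_le_right hn) hz
    (div_mul_cancel₀ _ hζN0.ne') (div_mul_cancel₀ _ hb.1.ne').symm

/-- Let `Λ ⊆ Ω` be LF-inducing sets. If the two-sided Mahavier system
of `F_Λ` is topologically transitive (resp. mixing), then so is that of `F_Ω`. -/
theorem stmt16 (Ω Λ : Finset ℝ) (hΩ : LFInducing Ω) (hΛ : LFInducing Λ) (hsub : Λ ⊆ Ω) :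
    (TopTransitive (shiftTwo (FOmega Λ)) → TopTransitive (shiftTwo (FOmega Ω))) ∧
    (TopMixing (shiftTwo (FOmega Λ)) → TopMixing (shiftTwo (FOmega Ω))) :=
  ⟨fun _ => topTransitive_shiftTwo_fOmega hΩ,
    topMixing_shiftTwo_fOmega_of_subset hΩ hΛ hsub⟩
end

section
/- For every LF-inducing set Ω, both the two-sided Mahavier dynamical system (I_{F_Ω}, σ_{F_Ω}) and the one-sided Mahavier dynamical system (I^+_{F_Ω}, σ^+_{F_Ω}) are topologically transitive. -/
open Set Filter Topology

/-!
All `ω ∈ Ω` are positive, so a zero propagates in both directions along a two-sided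
`F_Ω`-chain: a point of `I_{F_Ω}` is either the zero sequence, a uniform limit of positive
geometric chains, or positive everywhere. Hence positive points are dense.

Since `log ω₁ < 0 < log ω₂` have irrational ratio, the sums `a log ω₁ + b log ω₂` with
`a, b ∈ ℕ` are dense in `ℝ`. Multiplying `a` times by `ω₁` and then `b` times by `ω₂`, a chain
therefore leads from any `s ∈ (0, 1]` into any open subinterval of `(0, 1]`. Given positive
`x ∈ U` and `y ∈ V`, follow `x` up to index `N`, walk from `x_N` to some `t` slightly below
`y_{-N}`, and continue with the chain `(t / y_{-N}) · y`. The glued chain lies in `U`, and a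
shift of it lies in `V`.

The one-sided system is a factor of the two-sided one through restriction to `ℕ`, which is onto
because every point `s ∈ [0, 1]` has the `F_Ω`-predecessor `s / ω₂`.
-/

open Relation

theorem Irrational.eq_zero_of_intCast_mul_add_intCast_mul_eq_zero {α β : ℝ}
    (h : Irrational (α / β)) {m n : ℤ} (hmn : m * α + n * β = 0) : m = 0 ∧ n = 0 := by
  have hβ : β ≠ 0 := by rintro rfl; exact h.ne_zero (div_zero α)
  by_cases hm : m = 0
  · subst hm
    simpa [hβ] using hmn
  · refine absurd ?_ ((irrational_iff_ne_rational _).1 h (-n) m hm)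
    rw [div_eq_div_iff hβ (by exact_mod_cast hm)]
    push_cast
    linarith

theorem exists_mem_addSubmonoidClosure_pair_pos_lt {α β : ℝ} (hα : α < 0) (hβ : 0 < β)
    (hirr : Irrational (α / β)) {ε : ℝ} (hε : 0 < ε) :
    ∃ g ∈ AddSubmonoid.closure ({α, β} : Set ℝ), 0 < g ∧ g < ε := by
  obtain ⟨g, hgG, hg0, hgε⟩ :=
    (dense_addSubgroupClosure_pair_iff.2 hirr).exists_between (lt_min hε hβ)
  obtain ⟨m, n, rfl⟩ := AddSubgroup.mem_closure_pair.1 hgG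
  simp only [zsmul_eq_mul, lt_min_iff] at hg0 hgε
  rcases le_or_gt 0 m with hm | hm
  · have hn : 0 ≤ n := by
      by_contra! hn
      nlinarith [(by exact_mod_cast hm : (0 : ℝ) ≤ m), (by exact_mod_cast hn : (n : ℝ) < 0)]
    lift m to ℕ using hm
    lift n to ℕ using hn
    exact ⟨m • α + n • β, (AddSubmonoid.mem_closure_pair _ _ _).2 ⟨m, n, rfl⟩,
      by simpa [nsmul_eq_mul] using hg0, by simpa [nsmul_eq_mul] using hgε.1⟩
  · have hn : n ≤ 0 := by
      by_contra! hn
      nlinarith [(by exact_mod_cast (show m ≤ -1 by omega) : (m : ℝ) ≤ -1),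
        (by exact_mod_cast (show 1 ≤ n by omega) : (1 : ℝ) ≤ n)]
    obtain ⟨p, rfl⟩ := Int.exists_eq_neg_ofNat hm.le
    obtain ⟨q, rfl⟩ := Int.exists_eq_neg_ofNat hn
    set g : ℝ := ((-p : ℤ) : ℝ) * α + ((-q : ℤ) : ℝ) * β with hg
    -- `p • α + q • β = -g` lies in the submonoid, hence so does `β - k g`; for `k = ⌊β / g⌋₊`
    -- this lies in `[0, g)`, and it is nonzero by irrationality.
    set k := ⌊β / g⌋₊
    have hmem : β + k • (p • α + q • β) ∈ AddSubmonoid.closure ({α, β} : Set ℝ) :=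
      add_mem (AddSubmonoid.subset_closure (by simp)) (nsmul_mem (add_mem
        (nsmul_mem (AddSubmonoid.subset_closure (by simp)) _)
        (nsmul_mem (AddSubmonoid.subset_closure (by simp)) _)) _)
    have hval : β + k • (p • α + q • β) = β - k * g := by
      simp only [nsmul_eq_mul, hg]
      push_cast
      ring
    have hk₁ : (k : ℝ) * g ≤ β := by
      have := Nat.floor_le (div_nonneg hβ.le hg0.le)
      rwa [le_div_iff₀ hg0] at this
    have hk₂ : β < (k + 1) * g := by
      have := Nat.lt_floor_add_one (β / g)
      rwa [div_lt_iff₀ hg0] at this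
    refine ⟨_, hmem, hval ▸ lt_of_le_of_ne (by linarith) fun h0 => ?_, by linarith⟩
    have := (hirr.eq_zero_of_intCast_mul_add_intCast_mul_eq_zero
      (m := k * p) (n := 1 + k * q) (by push_cast at hg ⊢; linear_combination -h0 + k * hg)).2
    have : (0 : ℤ) < 1 + k * q := by positivity
    omega

theorem dense_addSubmonoidClosure_pair {α β : ℝ} (hα : α < 0) (hβ : 0 < β)
    (hirr : Irrational (α / β)) : Dense (AddSubmonoid.closure ({α, β} : Set ℝ) : Set ℝ) := by
  rw [dense_iff_exists_between]
  intro l r hlr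
  obtain ⟨g, hgM, hg0, hgr⟩ := exists_mem_addSubmonoidClosure_pair_pos_lt hα hβ hirr (sub_pos.2 hlr)
  obtain ⟨A, hA⟩ := exists_nat_gt (l / α)
  rw [div_lt_iff_of_neg hα] at hA
  -- climb from `A α < l` in steps of `g < r - l`
  set k := ⌊(l - A * α) / g⌋₊ + 1
  have hk₁ : l - A * α < k * g := by
    have := Nat.lt_floor_add_one ((l - A * α) / g)
    rwa [div_lt_iff₀ hg0, ← Nat.cast_succ] at this
  have hk₂ : (k - 1 : ℝ) * g ≤ l - A * α := by
    have := Nat.floor_le (div_nonneg (sub_pos.2 hA).le hg0.le)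
    rw [le_div_iff₀ hg0] at this
    simpa [k] using this
  refine ⟨A • α + k • g, add_mem (nsmul_mem (AddSubmonoid.subset_closure (by simp)) _)
    (nsmul_mem hgM _), ?_, ?_⟩ <;> simp only [nsmul_eq_mul] <;> nlinarith

section Mahavier

variable {X : Type*} {F : Set (X × X)}

theorem shiftTwo_iterate_apply (n : ℕ) (z : MahavierTwo F) (i : ℤ) :
    ((shiftTwo F)^[n] z : ℤ → X) i = (z : ℤ → X) (i + n) := by
  induction n generalizing z with
  | zero => simp
  | succ n ih =>
    rw [Function.iterate_succ_apply, ih]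
    simp only [shiftTwo, Nat.cast_succ, add_assoc, add_comm (n : ℤ)]

theorem exists_mem_mahavierTwo_eqOn_Iic_Ici {x y : ℤ → X} {p : ℤ}
    (hx : ∀ i < p, (x i, x (i + 1)) ∈ F) (hy : ∀ i ≥ p, (y i, y (i + 1)) ∈ F) (hxy : x p = y p) :
    ∃ z ∈ MahavierTwo F, (∀ i ≤ p, z i = x i) ∧ ∀ i ≥ p, z i = y i := by
  refine ⟨fun i => if i ≤ p then x i else y i, fun i => ?_, fun i hi => if_pos hi, fun i hi => ?_⟩
  · rcases lt_trichotomy i p with h | rfl | h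
    · simpa [h.le, Int.add_one_le_iff.2 h] using hx i h
    · simpa [hxy] using hy i le_rfl
    · simpa [h.not_ge, (h.trans (lt_add_one i)).not_ge] using hy i h.le
  · rcases hi.eq_or_lt with rfl | h
    · simp [hxy]
    · simp [h.not_ge]

theorem exists_extend_chain_of_reflTransGen {x : ℤ → X} {p : ℤ} {t : X}
    (hx : ∀ i < p, (x i, x (i + 1)) ∈ F) (ht : ReflTransGen (fun a b => (a, b) ∈ F) (x p) t) :
    ∃ m : ℕ, ∃ u : ℤ → X, (∀ i < p + m, (u i, u (i + 1)) ∈ F) ∧ (∀ i ≤ p, u i = x i) ∧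
      u (p + m) = t := by
  induction ht with
  | refl => exact ⟨0, x, by simpa using hx, fun _ _ => rfl, by simp⟩
  | @tail b c _ hbc ih =>
    obtain ⟨m, u, hu, hux, hum⟩ := ih
    refine ⟨m + 1, Function.update u (p + m + 1) c, fun i hi => ?_, fun i hi => ?_,
      by simp [add_assoc]⟩
    · obtain rfl | h := (show i ≤ p + m by push_cast at hi; omega).eq_or_lt
      · simpa [hum] using hbc
      · simpa [Function.update_of_ne (by omega : i ≠ p + m + 1),
          Function.update_of_ne (by omega : i + 1 ≠ p + m + 1)] using hu i h
    · rw [Function.update_of_ne (by omega), hux i hi]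

theorem exists_mem_mahavierTwo_connect {x y : ℤ → X} (hx : x ∈ MahavierTwo F)
    (hy : y ∈ MahavierTwo F) {p q : ℤ} (hqp : q ≤ p)
    (hxy : ReflTransGen (fun a b => (a, b) ∈ F) (x p) (y q)) :
    ∃ n : ℕ, ∃ z ∈ MahavierTwo F, (∀ i ≤ p, z i = x i) ∧ ∀ i ≥ q, z (i + n) = y i := by
  obtain ⟨m, u, hu, hux, hum⟩ := exists_extend_chain_of_reflTransGen (fun i _ => hx i) hxy
  set n := (p - q).toNat + m
  obtain ⟨z, hz, hzu, hzy⟩ := exists_mem_mahavierTwo_eqOn_Iic_Ici hu (y := fun i => y (i - n))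
    (fun i _ => by simpa [sub_add_eq_add_sub] using hy (i - n)) (by rw [hum]; congr 1; omega)
  exact ⟨n, z, hz, fun i hi => (hzu i (by omega)).trans (hux i hi),
    fun i hi => by rw [hzy _ (by omega), add_sub_cancel_right]⟩

end Mahavier

theorem exists_cylinder_subset {X : Type*} [PseudoMetricSpace X] {S : Set (ℤ → X)} {U : Set S}
    (hU : IsOpen U) {x : S} (hx : x ∈ U) :
    ∃ N : ℕ, ∃ ε > 0, ∀ z : S,
      (∀ i : ℤ, i.natAbs ≤ N → dist ((z : ℤ → X) i) ((x : ℤ → X) i) < ε) → z ∈ U := by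
  obtain ⟨t, ht, htU⟩ := (mem_nhds_subtype S x U).1 (hU.mem_nhds hx)
  rw [nhds_pi, Filter.mem_pi'] at ht
  obtain ⟨I, s, hs, hIs⟩ := ht
  choose ε hε hεs using fun i => Metric.mem_nhds_iff.1 (hs i)
  obtain ⟨δ, hδI, hδ⟩ := (((Filter.eventually_all_finset I).2 fun i _ =>
    eventually_nhdsWithin_of_eventually_nhds (eventually_lt_nhds (hε i))).and
    self_mem_nhdsWithin).exists (f := 𝓝[>] (0 : ℝ))
  refine ⟨I.sup Int.natAbs, δ, hδ, fun z hz => htU (hIs fun i hi => hεs i ?_)⟩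
  exact Metric.mem_ball.2 ((hz i (Finset.le_sup hi)).trans (hδI i hi))

theorem TopTransitive.of_semiconj {X Y : Type*} [TopologicalSpace X] [TopologicalSpace Y]
    {f : X → X} {g : Y → Y} {π : X → Y} (hf : TopTransitive f) (hπ : Continuous π)
    (hsurj : Function.Surjective π) (hfg : Function.Semiconj π f g) : TopTransitive g := by
  intro U V hU hV hUne hVne
  obtain ⟨n, _, ⟨x, hxU, rfl⟩, hxV⟩ := hf _ _ (hU.preimage hπ) (hV.preimage hπ)
    (hUne.preimage hsurj) (hVne.preimage hsurj)
  exact ⟨n, π (f^[n] x), ⟨π x, hxU, ((hfg.iterate_right n).eq x).symm⟩, hxV⟩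

section Restriction

variable {X : Type*} (F : Set (X × X))

def MahavierTwo.toPlus (z : MahavierTwo F) : MahavierPlus F :=
  ⟨fun n => (z : ℤ → X) n, fun n => by simpa using z.2 n⟩

theorem MahavierTwo.continuous_toPlus [TopologicalSpace X] :
    Continuous (MahavierTwo.toPlus F) :=
  continuous_induced_rng.2 <|
    continuous_pi fun n => (continuous_apply (n : ℤ)).comp continuous_subtype_val

theorem MahavierTwo.semiconj_toPlus :
    Function.Semiconj (MahavierTwo.toPlus F) (shiftTwo F) (shiftPlus F) := fun z => by
  ext n
  simp [MahavierTwo.toPlus, shiftTwo, shiftPlus]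

variable {F}

theorem MahavierTwo.toPlus_surjective (hpred : ∀ p ∈ F, ∃ c, (c, p.1) ∈ F) :
    Function.Surjective (MahavierTwo.toPlus F) := by
  choose pre hpre using hpred
  intro x
  -- `P k` is the `k`-th link of a backward chain ending with the link `(x 0, x 1)`
  set P : ℕ → F := fun k => (fun p : F => ⟨(pre p p.2, p.1.1), hpre p p.2⟩)^[k] ⟨_, x.2 0⟩
  have hP : ∀ k, (P (k + 1) : X × X) = (pre (P k) (P k).2, (P k).1.1) := fun k =>
    congrArg Subtype.val (Function.iterate_succ_apply' _ _ _)
  set z : ℤ → X := fun i => if 0 ≤ i then (x : ℕ → X) i.toNat else (P (-i).toNat).1.1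
  have hz : ∀ j : ℕ, z (-j) = (P j).1.1 := by
    rintro (_ | j)
    · simp [z, P]
    · simp only [z, if_neg (by omega : ¬ (0 : ℤ) ≤ -((j + 1 : ℕ) : ℤ)), neg_neg, Int.toNat_natCast]
  refine ⟨⟨z, fun i => ?_⟩, ?_⟩
  · rcases le_or_gt 0 i with hi | hi
    · simpa [z, hi, (by omega : 0 ≤ i + 1), (by omega : (i + 1).toNat = i.toNat + 1)]
        using x.2 i.toNat
    · obtain ⟨j, rfl⟩ : ∃ j : ℕ, i = -(j + 1 : ℕ) := ⟨(-i - 1).toNat, by omega⟩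
      have h := (P (j + 1)).2
      rw [show -((j + 1 : ℕ) : ℤ) + 1 = -(j : ℤ) by push_cast; ring, hz, hz]
      rw [hP] at h ⊢
      exact h
  · ext n
    simp [MahavierTwo.toPlus, z]

end Restriction

section FOmega

variable {Ω : Finset ℝ}

theorem irrational_log_div_log_of_zpow_eq_zpow {ω₁ ω₂ : ℝ} (h₁ : 0 < ω₁) (h₂ : 1 < ω₂)
    (h : ∀ k l : ℤ, ω₁ ^ k = ω₂ ^ l → k = 0 ∧ l = 0) :
    Irrational (Real.log ω₁ / Real.log ω₂) := by
  rw [irrational_iff_ne_rational]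
  intro a b hb hab
  rw [div_eq_div_iff (Real.log_pos h₂).ne' (by exact_mod_cast hb)] at hab
  refine hb (h b a (Real.log_injOn_pos (zpow_pos h₁ b) (zpow_pos (zero_lt_one.trans h₂) a) ?_)).1
  rw [Real.log_zpow, Real.log_zpow]
  linear_combination hab

theorem reflTransGen_FOmega_pow_mul {ω s : ℝ} (hω : ω ∈ Ω) :
    ∀ k : ℕ, (∀ i ≤ k, ω ^ i * s ∈ Icc (0 : ℝ) 1) →
      ReflTransGen (fun a b => (a, b) ∈ FOmega Ω) s (ω ^ k * s)
  | 0, _ => by rw [pow_zero, one_mul]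
  | k + 1, h => (reflTransGen_FOmega_pow_mul hω k fun i hi => h i (by omega)).tail
      ⟨h k (by omega), h (k + 1) le_rfl, ω, hω, by ring⟩

theorem reflTransGen_FOmega_pow_mul_pow_mul {ω₁ ω₂ s : ℝ} (h₁ : ω₁ ∈ Ω) (h₂ : ω₂ ∈ Ω)
    (hω₁ : ω₁ ∈ Icc (0 : ℝ) 1) (hω₂ : 1 ≤ ω₂) (hs : s ∈ Icc (0 : ℝ) 1) (a b : ℕ)
    (hab : ω₂ ^ b * (ω₁ ^ a * s) ≤ 1) :
    ReflTransGen (fun a b => (a, b) ∈ FOmega Ω) s (ω₂ ^ b * (ω₁ ^ a * s)) := by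
  have hs' : 0 ≤ ω₁ ^ a * s := mul_nonneg (pow_nonneg hω₁.1 a) hs.1
  refine (reflTransGen_FOmega_pow_mul h₁ a fun i _ => ⟨mul_nonneg (pow_nonneg hω₁.1 i) hs.1,
      mul_le_one₀ (pow_le_one₀ hω₁.1 hω₁.2) hs.1 hs.2⟩).trans
    (reflTransGen_FOmega_pow_mul h₂ b fun i hi => ⟨mul_nonneg (pow_nonneg (by linarith) i) hs', ?_⟩)
  exact (mul_le_mul_of_nonneg_right (pow_le_pow_right₀ hω₂ hi) hs').trans hab

theorem exists_reflTransGen_FOmega_mem_Ioo (hΩ : LFInducing Ω) {s u v : ℝ}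
    (hs : s ∈ Ioc (0 : ℝ) 1) (hu : 0 < u) (huv : u < v) (hv : v ≤ 1) :
    ∃ t ∈ Ioo u v, ReflTransGen (fun a b => (a, b) ∈ FOmega Ω) s t := by
  obtain ⟨-, hpos, ω₁, h₁, ω₂, h₂, hω₁, hω₂, hind⟩ := hΩ
  have hω₁0 := hpos ω₁ h₁
  have hω₂0 := hpos ω₂ h₂
  obtain ⟨g, hg, hgl, hgr⟩ := (dense_addSubmonoidClosure_pair (Real.log_neg hω₁0 hω₁)
    (Real.log_pos hω₂) (irrational_log_div_log_of_zpow_eq_zpow hω₁0 hω₂ hind)).exists_between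
    (sub_lt_sub_right (Real.log_lt_log hu huv) (Real.log s))
  obtain ⟨a, b, rfl⟩ := (AddSubmonoid.mem_closure_pair _ _ _).1 hg
  have hs0 := hs.1
  have hlog : Real.log (ω₂ ^ b * (ω₁ ^ a * s)) =
      a • Real.log ω₁ + b • Real.log ω₂ + Real.log s := by
    rw [Real.log_mul (by positivity) (by positivity), Real.log_mul (by positivity) hs0.ne',
      Real.log_pow, Real.log_pow, nsmul_eq_mul, nsmul_eq_mul]
    ring
  have ht : ω₂ ^ b * (ω₁ ^ a * s) ∈ Ioo u v :=
    ⟨(Real.log_lt_log_iff hu (by positivity)).1 (by linarith),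
      (Real.log_lt_log_iff (by positivity) (hu.trans huv)).1 (by linarith)⟩
  exact ⟨_, ht, reflTransGen_FOmega_pow_mul_pow_mul h₁ h₂ ⟨hω₁0.le, hω₁.le⟩ hω₂.le
    ⟨hs0.le, hs.2⟩ a b (ht.2.le.trans hv)⟩

theorem mul_mem_mahavierTwo_FOmega {c : ℝ} (hc : c ∈ Icc (0 : ℝ) 1) {y : ℤ → ℝ}
    (hy : y ∈ MahavierTwo (FOmega Ω)) : (fun i => c * y i) ∈ MahavierTwo (FOmega Ω) := fun i => by
  obtain ⟨h₁, h₂, ω, hω, h⟩ := hy i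
  refine ⟨⟨mul_nonneg hc.1 h₁.1, mul_le_one₀ hc.2 h₁.1 h₁.2⟩,
    ⟨mul_nonneg hc.1 h₂.1, mul_le_one₀ hc.2 h₂.1 h₂.2⟩, ω, hω, ?_⟩
  simp only at h ⊢
  rw [h]
  ring

theorem zpow_ite_mem_mahavierTwo_FOmega {ω₁ ω₂ : ℝ} (h₁ : ω₁ ∈ Ω) (h₂ : ω₂ ∈ Ω)
    (hω₁ : ω₁ ∈ Ioc (0 : ℝ) 1) (hω₂ : 1 ≤ ω₂) :
    (fun i : ℤ => if i < 0 then ω₂ ^ i else ω₁ ^ i) ∈ MahavierTwo (FOmega Ω) := by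
  have hI : ∀ i : ℤ, (if i < 0 then ω₂ ^ i else ω₁ ^ i) ∈ Icc (0 : ℝ) 1 := fun i => by
    split_ifs with hi
    · exact ⟨zpow_nonneg (by linarith) i, zpow_le_one_of_nonpos₀ hω₂ hi.le⟩
    · exact ⟨zpow_nonneg hω₁.1.le i, zpow_le_one₀ hω₁.1 hω₁.2 (not_lt.1 hi)⟩
  intro i
  refine ⟨hI i, hI (i + 1), ?_⟩
  rcases lt_or_ge i 0 with hi | hi
  · refine ⟨ω₂, h₂, ?_⟩
    simp only [hi, if_true]
    rw [← zpow_one_add₀ (by positivity), add_comm]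
    split_ifs with h
    · rfl
    · rw [show 1 + i = 0 by omega, zpow_zero, zpow_zero]
  · refine ⟨ω₁, h₁, ?_⟩
    simp only
    rw [if_neg (not_lt.2 hi), if_neg (by omega), zpow_add_one₀ hω₁.1.ne', mul_comm]

theorem mahavierTwo_FOmega_eq_zero_of_eq_zero (hpos : ∀ ω ∈ Ω, 0 < ω) {z : ℤ → ℝ}
    (hz : z ∈ MahavierTwo (FOmega Ω)) {k : ℤ} (hk : z k = 0) (i : ℤ) : z i = 0 := by
  induction i using Int.inductionOn' (b := k) with
  | zero => exact hk
  | succ j _ ih =>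
    obtain ⟨-, -, ω, -, h⟩ := hz j
    simp only at h
    rw [h, ih, mul_zero]
  | pred j _ ih =>
    obtain ⟨-, -, ω, hω, h⟩ := hz (j - 1)
    simp only [sub_add_cancel, ih] at h
    exact (mul_eq_zero.1 h.symm).resolve_left (hpos ω hω).ne'

theorem exists_pos_mem_mahavierTwo_FOmega_dist_le (hΩ : LFInducing Ω) {z : ℤ → ℝ}
    (hz : z ∈ MahavierTwo (FOmega Ω)) {δ : ℝ} (hδ : 0 < δ) :
    ∃ z' ∈ MahavierTwo (FOmega Ω), (∀ i, 0 < z' i) ∧ ∀ i, dist (z' i) (z i) ≤ δ := by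
  obtain ⟨-, hpos, ω₁, h₁, ω₂, h₂, hω₁, hω₂, -⟩ := hΩ
  by_cases hz0 : ∀ i, 0 < z i
  · exact ⟨z, hz, hz0, fun i => by simpa using hδ.le⟩
  obtain ⟨k, hk⟩ := not_forall.1 hz0
  have hzero := mahavierTwo_FOmega_eq_zero_of_eq_zero hpos hz (le_antisymm (not_lt.1 hk) (hz k).1.1)
  have hg := zpow_ite_mem_mahavierTwo_FOmega h₁ h₂ ⟨hpos ω₁ h₁, hω₁.le⟩ hω₂.le
  have hc : min δ 1 ∈ Icc (0 : ℝ) 1 := ⟨by positivity, min_le_right _ _⟩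
  refine ⟨_, mul_mem_mahavierTwo_FOmega hc hg, fun i => ?_, fun i => ?_⟩
  · have := hpos ω₁ h₁
    have := hpos ω₂ h₂
    exact mul_pos (by positivity) (by split_ifs <;> positivity)
  · rw [hzero i, Real.dist_eq, sub_zero, abs_of_nonneg (mul_nonneg hc.1 (hg i).1.1)]
    exact (mul_le_of_le_one_right hc.1 (hg i).1.2).trans (min_le_left _ _)

theorem exists_pos_mem_of_isOpen (hΩ : LFInducing Ω) {U : Set (MahavierTwo (FOmega Ω))}
    (hU : IsOpen U) (hne : U.Nonempty) : ∃ x ∈ U, ∀ i, 0 < (x : ℤ → ℝ) i := by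
  obtain ⟨x, hx⟩ := hne
  obtain ⟨N, ε, hε, hxU⟩ := exists_cylinder_subset hU hx
  obtain ⟨z, hz, hzpos, hzx⟩ := exists_pos_mem_mahavierTwo_FOmega_dist_le hΩ x.2 (half_pos hε)
  exact ⟨⟨z, hz⟩, hxU _ fun i _ => (hzx i).trans_lt (half_lt_self hε), hzpos⟩

theorem exists_mem_mahavierTwo_FOmega_connect (hΩ : LFInducing Ω) {x y : ℤ → ℝ}
    (hx : x ∈ MahavierTwo (FOmega Ω)) (hy : y ∈ MahavierTwo (FOmega Ω)) {p q : ℤ} (hqp : q ≤ p)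
    (hxp : 0 < x p) (hyq : 0 < y q) {δ : ℝ} (hδ : 0 < δ) :
    ∃ n : ℕ, ∃ z ∈ MahavierTwo (FOmega Ω), (∀ i ≤ p, z i = x i) ∧
      ∀ i ≥ q, dist (z (i + n)) (y i) < δ := by
  obtain ⟨t, ⟨htu, hty⟩, hxt⟩ := exists_reflTransGen_FOmega_mem_Ioo hΩ ⟨hxp, (hx p).1.2⟩
    (u := max ((1 - δ) * y q) (y q / 2)) (lt_max_of_lt_right (by positivity))
    (max_lt (by nlinarith) (by linarith)) (hy q).1.2
  rw [max_lt_iff] at htu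
  have hc : t / y q ∈ Icc (0 : ℝ) 1 := ⟨div_nonneg (by linarith) hyq.le, (div_le_one hyq).2 hty.le⟩
  have hc' : 1 - δ < t / y q := (lt_div_iff₀ hyq).2 htu.1
  obtain ⟨n, z, hz, hzx, hzy⟩ := exists_mem_mahavierTwo_connect hx
    (mul_mem_mahavierTwo_FOmega hc hy) hqp (by simpa [div_mul_cancel₀ t hyq.ne'] using hxt)
  refine ⟨n, z, hz, hzx, fun i hi => ?_⟩
  have hyi : y i ∈ Icc (0 : ℝ) 1 := (hy i).1
  rw [hzy i hi, Real.dist_eq, abs_sub_comm, show y i - t / y q * y i = (1 - t / y q) * y i by ring,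
    abs_of_nonneg (mul_nonneg (by linarith [hc.2]) hyi.1)]
  calc (1 - t / y q) * y i ≤ 1 - t / y q := mul_le_of_le_one_right (by linarith [hc.2]) hyi.2
    _ < δ := by linarith

theorem topTransitive_shiftTwo_FOmega (hΩ : LFInducing Ω) :
    TopTransitive (shiftTwo (FOmega Ω)) := by
  intro U V hU hV hUne hVne
  obtain ⟨x, hxU, hxpos⟩ := exists_pos_mem_of_isOpen hΩ hU hUne
  obtain ⟨y, hyV, hypos⟩ := exists_pos_mem_of_isOpen hΩ hV hVne
  obtain ⟨N₁, ε₁, hε₁, hxU'⟩ := exists_cylinder_subset hU hxU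
  obtain ⟨N₂, ε₂, hε₂, hyV'⟩ := exists_cylinder_subset hV hyV
  obtain ⟨n, z, hz, hzx, hzy⟩ := exists_mem_mahavierTwo_FOmega_connect hΩ x.2 y.2
    (by omega : -(N₂ : ℤ) ≤ N₁) (hxpos N₁) (hypos _) hε₂
  refine ⟨n, _, ⟨⟨z, hz⟩, hxU' _ fun i hi => ?_, rfl⟩, hyV' _ fun i hi => ?_⟩
  · simpa [hzx i (by omega)] using hε₁
  · rw [shiftTwo_iterate_apply]
    exact hzy i (by omega)

theorem exists_pred_mem_FOmega (hΩ : LFInducing Ω) : ∀ p ∈ FOmega Ω, ∃ c, (c, p.1) ∈ FOmega Ω := by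
  obtain ⟨-, -, -, -, ω₂, h₂, -, hω₂, -⟩ := hΩ
  rintro p ⟨⟨hp0, hp1⟩, -⟩
  exact ⟨p.1 / ω₂, ⟨by positivity, (div_le_one (by linarith)).2 (by linarith)⟩, ⟨hp0, hp1⟩, ω₂, h₂,
    (mul_div_cancel₀ _ (by positivity)).symm⟩

end FOmega

/-- For every LF-inducing set `Ω`, both the two-sided and the one-sided
Mahavier dynamical systems of `F_Ω` are topologically transitive. -/
theorem stmt17 (Ω : Finset ℝ) (hΩ : LFInducing Ω) :
    TopTransitive (shiftTwo (FOmega Ω)) ∧ TopTransitive (shiftPlus (FOmega Ω)) :=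
  ⟨topTransitive_shiftTwo_FOmega hΩ,
    (topTransitive_shiftTwo_FOmega hΩ).of_semiconj (MahavierTwo.continuous_toPlus _)
      (MahavierTwo.toPlus_surjective (exists_pred_mem_FOmega hΩ)) (MahavierTwo.semiconj_toPlus _)⟩
end
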